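/- For all s, t ∈ [0,T], the series ∑_{k=0}^∞ λ_k f_k(s) f_k(t) converges to min(s,t), where λ_k = 1/ω_k², f_k(t) = sqrt(2/T) sin(ω_k t), and ω_k = (π/T)(k+1/2). -/

import Mathlib

open Real

lemma cosSum {x : ℝ} (hx : x ∈ Set.Icc (0:ℝ) 1) :
    HasSum (fun n : ℕ => Real.cos (2*π*n*x) / (n:ℝ)^2) (π^2*(x^2 - x + 1/6)) := by
  have h := hasSum_one_div_nat_pow_mul_cos (k := 1) one_ne_zero hx
  have hb2 : _root_.bernoulli 2 = 1/6 := by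
    rw [bernoulli, bernoulli'_two]; norm_num
  have hb : (Polynomial.map (algebraMap ℚ ℝ) (Polynomial.bernoulli 2)).eval x
      = x^2 - x + 1/6 := by
    simp [Polynomial.bernoulli, Finset.sum_range_succ, bernoulli_one, hb2]
    ring
  rw [show 2*1 = 2 from rfl] at h
  rw [hb] at h
  convert h using 2 with n
  · rw [div_eq_mul_inv, mul_comm]; ring_nf
  · norm_num [Nat.factorial]; ring

lemma oddCosSum {u : ℝ} (hu0 : 0 ≤ u) (hu1 : u ≤ π) :
    HasSum (fun k : ℕ => Real.cos ((2*k+1)*u) / ((2*(k:ℝ)+1))^2) (π^2/8 - π*u/4) := by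
  have hπ := pi_pos
  set F : ℕ → ℝ := fun n => Real.cos ((n:ℝ)*u) / (n:ℝ)^2 with hF
  have hx1 : u/(2*π) ∈ Set.Icc (0:ℝ) 1 := by
    constructor
    · positivity
    · rw [div_le_one (by positivity)]; linarith
  have hx2 : u/π ∈ Set.Icc (0:ℝ) 1 := by
    constructor
    · positivity
    · rw [div_le_one hπ]; linarith
  have h1 : HasSum F (π^2*((u/(2*π))^2 - u/(2*π) + 1/6)) := by
    have := cosSum hx1
    convert this using 2 with n
    have : 2*π*n*(u/(2*π)) = n*u := by field_simp
    rw [hF]; simp only [this]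
  have h2 := cosSum hx2
  have e2 : ∀ n : ℕ, 2*π*n*(u/π) = n*(2*u) := by
    intro n; field_simp
  simp only [e2] at h2
  have heven : HasSum (fun k : ℕ => F (2*k)) (π^2*((u/π)^2 - u/π + 1/6) / 4) := by
    have := h2.div_const 4
    convert this using 2 with k
    rfl
    rw [hF]
    push_cast
    rw [show 2*(k:ℝ)*u = (k:ℝ)*(2*u) by ring]
    ring
  have hsummo : Summable (fun k : ℕ => F (2*k+1)) :=
    h1.summable.comp_injective (fun a b hab => by omega)
  obtain ⟨c, hc⟩ := hsummo
  have htot : HasSum F (π^2*((u/π)^2 - u/π + 1/6) / 4 + c) := heven.even_add_odd hc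
  have huniq := htot.unique h1
  have hπ' : π ≠ 0 := hπ.ne'
  have hS1 : π^2*((u/(2*π))^2 - u/(2*π) + 1/6) = u^2/4 - π*u/2 + π^2/6 := by
    field_simp; ring
  have hS2 : π^2*((u/π)^2 - u/π + 1/6) = u^2 - π*u + π^2/6 := by
    field_simp
  rw [hS1, hS2] at huniq
  have hcv : c = π^2/8 - π*u/4 := by linarith
  rw [hcv] at hc
  convert hc using 2 with k
  rw [hF]
  push_cast
  ring_nf

lemma kernelCosSum {T : ℝ} (hT : 0 < T) {x : ℝ} (hx0 : 0 ≤ x) (hx1 : x ≤ 2*T) :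
    HasSum (fun k : ℕ => Real.cos ((π / T * ((k:ℝ) + 1/2)) * x) / (π / T * ((k:ℝ) + 1/2))^2)
      (T^2/2 - T*x/2) := by
  have hπ := pi_pos
  have hT' : T ≠ 0 := hT.ne'
  have hπ' : π ≠ 0 := hπ.ne'
  set u := π * x / (2*T) with hu
  have hu0 : 0 ≤ u := by positivity
  have hu1 : u ≤ π := by
    rw [hu, div_le_iff₀ (by positivity)]
    nlinarith
  have h := (oddCosSum hu0 hu1).mul_left (4*T^2/π^2)
  convert h using 1
  · rfl
  · funext k
    rw [show (π / T * ((k:ℝ) + 1/2)) * x = (2*(k:ℝ)+1) * u by rw [hu]; field_simp]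
    rw [show π / T * ((k:ℝ) + 1/2) = π * (2*(k:ℝ)+1) / (2*T) by field_simp]
    have h21 : (2*(k:ℝ)+1) ≠ 0 := by positivity
    field_simp
    ring
  · rw [hu]
    field_simp
    ring
theorem mercer_expansion_min_kernel (T : ℝ) (hT : 0 < T)
    (ω : ℕ → ℝ) (hω : ∀ k, ω k = (π / T) * ((k : ℝ) + 1 / 2))
    (lam : ℕ → ℝ) (hlam : ∀ k, lam k = 1 / ω k ^ 2)
    (f : ℕ → ℝ → ℝ) (hf : ∀ k t, f k t = Real.sqrt (2 / T) * Real.sin (ω k * t))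
    (s t : ℝ) (hs : s ∈ Set.Icc (0 : ℝ) T) (ht : t ∈ Set.Icc (0 : ℝ) T) :
    HasSum (fun k : ℕ => lam k * f k s * f k t) (min s t) := by
  obtain ⟨hs0, hsT⟩ := hs
  obtain ⟨ht0, htT⟩ := ht
  have hT' : T ≠ 0 := hT.ne'
  have h3a := kernelCosSum hT (x := |s - t|) (abs_nonneg _)
    (by rw [abs_sub_le_iff]; constructor <;> linarith)
  have h3b := kernelCosSum hT (x := s + t) (by linarith) (by linarith)
  have h := (h3a.sub h3b).div_const T
  convert h using 1
  · rfl
  · funext k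
    rw [hlam, hf, hf, hω]
    have hω0 : (0:ℝ) < π / T * ((k:ℝ) + 1/2) := by positivity
    set a := π / T * ((k:ℝ) + 1/2) with ha
    have ha' : a ≠ 0 := hω0.ne'
    have hsq : Real.sqrt (2/T) * Real.sqrt (2/T) = 2/T :=
      Real.mul_self_sqrt (by positivity)
    have hprod : Real.sin (a*s) * Real.sin (a*t)
        = (Real.cos (a*s - a*t) - Real.cos (a*s + a*t))/2 := by
      have h2 := Real.cos_sub_cos (a*s - a*t) (a*s + a*t)
      rw [show (a*s - a*t + (a*s + a*t))/2 = a*s by ring,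
        show (a*s - a*t - (a*s + a*t))/2 = -(a*t) by ring, Real.sin_neg] at h2
      rw [h2]; ring
    have habs : a * |s - t| = |a*s - a*t| := by
      rw [← mul_sub, abs_mul, abs_of_pos hω0]
    rw [habs, Real.cos_abs, mul_add]
    rw [show 1/a^2 * (Real.sqrt (2/T) * Real.sin (a*s)) * (Real.sqrt (2/T) * Real.sin (a*t))
        = (Real.sqrt (2/T) * Real.sqrt (2/T)) * (Real.sin (a*s) * Real.sin (a*t)) / a^2 by ring,
      hsq, hprod]
    field_simp
  · rcases le_total s t with hst | hst
    · rw [min_eq_left hst, abs_of_nonpos (by linarith)]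
      field_simp; ring
    · rw [min_eq_right hst, abs_of_nonneg (by linarith)]
      field_simp; ring
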